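/- Let Ω = (⇀, ↼, ◁, ▷, σ, ·) and Ω' = (⇀', ↼', ◁', ▷', σ', ·') be two type (a2) extending data of an anti-flexible algebra A through a vector space V, with associated unified products A_σ # V and A_σ' # V. Then there is a bijection between the set of algebra homomorphisms φ: A_σ # V → A_σ' # V satisfying φ(a,0) = (a,0) for all a in A, and the set of pairs (r,s) of linear maps r: V→A, s: V→V satisfying, for all a in A and x,y in V: (M1) r(x·y) = r(x)r(y) + σ'(s(x),s(y)) − σ(x,y) + r(x)↼'s(y) + s(x)⇀'r(y); (M2) s(x·y) = r(x)▷'s(y) + s(x)◁'r(y) + s(x)·'s(y); (M3) r(x◁a) = r(x)a − x⇀a + s(x)⇀'a; (M4) s(x◁a) = s(x)◁'a; (M5) r(a▷x) = a r(x) − a↼x + a↼'s(x); (M6) s(a▷x) = a▷'s(x). Under this bijection the homomorphism corresponding to (r,s) is φ(a,x) = (a + r(x), s(x)); moreover φ is an isomorphism if and only if s is a linear isomorphism of V. -/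

import Mathlib

/-! A linear map on `A × V` fixing every `(a, 0)` is determined by where it sends `(0, x)`,
whose two components are `r x` and `s x`; so such maps are exactly the `φ_{r,s}`.
By bilinearity, `φ_{r,s}` is multiplicative as soon as it is multiplicative on the products
`(0,x)(0,y)`, `(0,x)(a,0)` and `(a,0)(0,x)`, and the two components of these three identities
are (M1)–(M6). Finally `φ_{r,s} = (id × s) ∘ ((a, x) ↦ (a + r x, x))` with an invertible
shear on the right, so `φ_{r,s}` is bijective iff `s` is. -/

open TensorProduct LinearMap

namespace AntiFlexible

section Basic

variable (K : Type*) [Field K] [CharZero K]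
variable (M N P : Type*)
variable [AddCommGroup M] [Module K M] [AddCommGroup N] [Module K N] [AddCommGroup P] [Module K P]

/-- The flip map `τ : M ⊗ N → N ⊗ M`. -/
noncomputable def τ : M ⊗[K] N →ₗ[K] N ⊗[K] M := (TensorProduct.comm K M N).toLinearMap

/-- `τ₁₃ : (M ⊗ N) ⊗ P → (P ⊗ N) ⊗ M`, exchanging the outer tensor factors. -/
noncomputable def τ₁₃ : (M ⊗[K] N) ⊗[K] P →ₗ[K] (P ⊗[K] N) ⊗[K] M :=
  (TensorProduct.assoc K P N M).symm.toLinearMap ∘ₗ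
    (lTensor P (τ K M N)) ∘ₗ (TensorProduct.comm K (M ⊗[K] N) P).toLinearMap

/-- The reassociator `M ⊗ (N ⊗ P) → (M ⊗ N) ⊗ P`. -/
noncomputable def α : M ⊗[K] (N ⊗[K] P) →ₗ[K] (M ⊗[K] N) ⊗[K] P :=
  (TensorProduct.assoc K M N P).symm.toLinearMap

/-- The antisymmetrizer `id - τ` on `M ⊗ M`. -/
noncomputable def ω : M ⊗[K] M →ₗ[K] M ⊗[K] M := LinearMap.id - τ K M M

end Basic

section Structures

variable {K : Type*} [Field K] [CharZero K]
variable {A H V : Type*}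
variable [AddCommGroup A] [Module K A] [AddCommGroup H] [Module K H]
variable [AddCommGroup V] [Module K V]

/-- Anti-flexible algebra: `(ab)c - a(bc) = (cb)a - c(ba)`. -/
def IsAFAlgebra (m : A →ₗ[K] A →ₗ[K] A) : Prop :=
  ∀ a b c, m (m a b) c - m a (m b c) = m (m c b) a - m c (m b a)

/-- The coassociativity defect `(Δ ⊗ id)Δ - (id ⊗ Δ)Δ`, viewed in `(A ⊗ A) ⊗ A`. -/
noncomputable def coassocDefect (Δ : A →ₗ[K] A ⊗[K] A) : A →ₗ[K] (A ⊗[K] A) ⊗[K] A :=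
  (rTensor A Δ) ∘ₗ Δ - (α K A A A) ∘ₗ (lTensor A Δ) ∘ₗ Δ

/-- Anti-flexible coalgebra: the coassociativity defect is `τ₁₃`-invariant. -/
def IsAFCoalgebra (Δ : A →ₗ[K] A ⊗[K] A) : Prop :=
  ∀ a, coassocDefect Δ a = τ₁₃ K A A A (coassocDefect Δ a)

/-- Anti-flexible bialgebra. -/
def IsAFBialgebra (m : A →ₗ[K] A →ₗ[K] A) (Δ : A →ₗ[K] A ⊗[K] A) : Prop :=
  IsAFAlgebra m ∧ IsAFCoalgebra Δ ∧
  (∀ a b, Δ (m a b) + τ K A A (Δ (m b a)) =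
      rTensor A (m b) (τ K A A (Δ a)) + lTensor A (m.flip a) (τ K A A (Δ b))
      + rTensor A (m.flip b) (Δ a) + lTensor A (m a) (Δ b)) ∧
  (∀ a b, ω K A (lTensor A (m.flip b) (Δ a) - rTensor A (m b) (Δ a)
      - lTensor A (m.flip a) (Δ b) + rTensor A (m a) (Δ b)) = 0)

/-- `V` is a bimodule over the anti-flexible algebra `(H, m)` via `tr = ▷` and `tl = ◁`. -/
def IsAFBimodule (m : H →ₗ[K] H →ₗ[K] H)
    (tr : H →ₗ[K] V →ₗ[K] V) (tl : V →ₗ[K] H →ₗ[K] V) : Prop :=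
  (∀ x y v, tr (m x y) v - tr x (tr y v) = tl (tl v y) x - tl v (m y x)) ∧
  (∀ x y v, tl (tr x v) y - tr x (tl v y) = tl (tr y v) x - tr y (tl v x))

/-- `V` is a bicomodule over the anti-flexible coalgebra `(H, Δ)` via `φ` and `ψ`. -/
def IsAFBicomodule (Δ : H →ₗ[K] H ⊗[K] H)
    (φ : V →ₗ[K] H ⊗[K] V) (ψ : V →ₗ[K] V ⊗[K] H) : Prop :=
  (∀ v, rTensor V Δ (φ v) - α K H H V (lTensor H φ (φ v))
      = τ₁₃ K V H H (rTensor H ψ (ψ v) - α K V H H (lTensor V Δ (ψ v)))) ∧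
  (∀ v, rTensor H φ (ψ v) - α K H V H (lTensor H ψ (φ v))
      = τ₁₃ K H V H (rTensor H φ (ψ v) - α K H V H (lTensor H ψ (φ v))))

/-- Anti-flexible Hopf bimodule over `(H, m, Δ)`, with conditions (HM1)-(HM3). -/
def IsAFHopfBimodule (m : H →ₗ[K] H →ₗ[K] H) (Δ : H →ₗ[K] H ⊗[K] H)
    (tr : H →ₗ[K] V →ₗ[K] V) (tl : V →ₗ[K] H →ₗ[K] V)
    (φ : V →ₗ[K] H ⊗[K] V) (ψ : V →ₗ[K] V ⊗[K] H) : Prop :=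
  IsAFBimodule m tr tl ∧ IsAFBicomodule Δ φ ψ ∧
  -- (HM1)
  (∀ x v, φ (tr x v) + τ K V H (ψ (tl v x))
      = lTensor H (tr x) (φ v) + lTensor H (tl.flip x) (τ K V H (ψ v))) ∧
  -- (HM2)
  (∀ x v, ψ (tr x v) + τ K H V (φ (tl v x))
      = rTensor H (tr.flip v) (Δ x) + lTensor V (m x) (ψ v)
      + lTensor V (m.flip x) (τ K H V (φ v)) + rTensor H (tl v) (τ K H H (Δ x))) ∧
  -- (HM3)
  (∀ x v, rTensor H (tr x) (ψ v) - rTensor H (tl v) (Δ x) - lTensor V (m.flip x) (ψ v)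
      = τ K H V (- lTensor H (tl.flip x) (φ v) + rTensor V (m x) (φ v)
        + lTensor H (tr.flip v) (Δ x)))

/-- `A` is a braided anti-flexible bialgebra over `(H, mH, ΔH)`:
an anti-flexible algebra and coalgebra in the category of anti-flexible Hopf bimodules,
satisfying (BB1) and (BB2). -/
def IsBraidedAFBialgebra (mA : A →ₗ[K] A →ₗ[K] A) (ΔA : A →ₗ[K] A ⊗[K] A)
    (mH : H →ₗ[K] H →ₗ[K] H) (ΔH : H →ₗ[K] H ⊗[K] H)
    (tr : H →ₗ[K] A →ₗ[K] A) (tl : A →ₗ[K] H →ₗ[K] A)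
    (φ : A →ₗ[K] H ⊗[K] A) (ψ : A →ₗ[K] A ⊗[K] H) : Prop :=
  IsAFAlgebra mA ∧ IsAFCoalgebra ΔA ∧
  IsAFHopfBimodule mH ΔH tr tl φ ψ ∧
  -- H-bimodule algebra
  (∀ x a b, mA (tr x a) b - tr x (mA a b) = tl (mA b a) x - mA b (tl a x)) ∧
  (∀ x a b, mA a (tr x b) - mA (tl a x) b = mA b (tr x a) - mA (tl b x) a) ∧
  -- H-bimodule coalgebra
  (∀ x b, ΔA (tr x b) + τ K A A (ΔA (tl b x))
      = lTensor A (tl.flip x) (τ K A A (ΔA b)) + lTensor A (tr x) (ΔA b)) ∧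
  (∀ x b, ω K A (rTensor A (tr x) (ΔA b) - lTensor A (tl.flip x) (ΔA b)) = 0) ∧
  -- H-bicomodule algebra
  (∀ a b, φ (mA a b) + τ K A H (ψ (mA b a))
      = lTensor H (mA a) (φ b) + lTensor H (mA.flip a) (τ K A H (ψ b))) ∧
  (∀ a b, lTensor H (mA.flip b) (φ a) - lTensor H (mA.flip a) (φ b)
      = τ K A H (rTensor H (mA a) (ψ b) - rTensor H (mA b) (ψ a))) ∧
  -- H-bicomodule coalgebra
  (∀ a, rTensor A φ (ΔA a) - α K H A A (lTensor H ΔA (φ a))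
      = τ₁₃ K A A H (rTensor H ΔA (ψ a) - α K A A H (lTensor A ψ (ΔA a)))) ∧
  (∀ a, rTensor A ψ (ΔA a) - α K A H A (lTensor A φ (ΔA a))
      = τ₁₃ K A H A (rTensor A ψ (ΔA a) - α K A H A (lTensor A φ (ΔA a)))) ∧
  -- (BB1)
  (∀ a b, ΔA (mA a b) + τ K A A (ΔA (mA b a))
      = rTensor A (mA.flip b) (ΔA a) + rTensor A (mA b) (τ K A A (ΔA a))
      + lTensor A (mA a) (ΔA b) + lTensor A (mA.flip a) (τ K A A (ΔA b))
      + rTensor A (tr.flip b) (φ a) + rTensor A (tl b) (τ K A H (ψ a))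
      + lTensor A (tl a) (ψ b) + lTensor A (tr.flip a) (τ K H A (φ b))) ∧
  -- (BB2)
  (∀ a b, ω K A (lTensor A (mA.flip b) (ΔA a) - rTensor A (mA b) (ΔA a)
        - lTensor A (mA.flip a) (ΔA b) + rTensor A (mA a) (ΔA b))
      + ω K A (lTensor A (tr.flip b) (ψ a) - rTensor A (tl b) (φ a)
        - lTensor A (tr.flip a) (ψ b) + rTensor A (tl a) (φ b)) = 0)

/-- The (cocycle) cross product multiplication on `A × H`:
`(a,x)(b,y) = (ab + x⇀b + a↼y + σ(x,y), xy + x◁b + a▷y + θ(a,b))`,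
where `tr = ⇀`, `tl = ↼`, `sr = ▷`, `sl = ◁`. -/
noncomputable def prodMul (mA : A →ₗ[K] A →ₗ[K] A) (mH : H →ₗ[K] H →ₗ[K] H)
    (tr : H →ₗ[K] A →ₗ[K] A) (tl : A →ₗ[K] H →ₗ[K] A)
    (sr : A →ₗ[K] H →ₗ[K] H) (sl : H →ₗ[K] A →ₗ[K] H)
    (σ : H →ₗ[K] H →ₗ[K] A) (θ : A →ₗ[K] A →ₗ[K] H) :
    (A × H) →ₗ[K] (A × H) →ₗ[K] (A × H) :=
  ((mA ∘ₗ fst K A H).compl₂ (fst K A H) + (tr ∘ₗ snd K A H).compl₂ (fst K A H)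
    + (tl ∘ₗ fst K A H).compl₂ (snd K A H)
    + (σ ∘ₗ snd K A H).compl₂ (snd K A H)).compr₂ (inl K A H)
  + ((mH ∘ₗ snd K A H).compl₂ (snd K A H) + (sl ∘ₗ snd K A H).compl₂ (fst K A H)
    + (sr ∘ₗ fst K A H).compl₂ (snd K A H)
    + (θ ∘ₗ fst K A H).compl₂ (fst K A H)).compr₂ (inr K A H)

/-- The (cycle) cross coproduct comultiplication on `A × H`:
`Δ(a) = Δ_A(a) + φ(a) + ψ(a) + P(a)` and `Δ(x) = Δ_H(x) + ρ(x) + γ(x) + Q(x)`. -/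
noncomputable def prodComul (ΔA : A →ₗ[K] A ⊗[K] A) (ΔH : H →ₗ[K] H ⊗[K] H)
    (φ : A →ₗ[K] H ⊗[K] A) (ψ : A →ₗ[K] A ⊗[K] H)
    (ρ : H →ₗ[K] A ⊗[K] H) (γ : H →ₗ[K] H ⊗[K] A)
    (P : A →ₗ[K] H ⊗[K] H) (Q : H →ₗ[K] A ⊗[K] A) :
    (A × H) →ₗ[K] (A × H) ⊗[K] (A × H) :=
  (TensorProduct.map (inl K A H) (inl K A H)) ∘ₗ ΔA ∘ₗ fst K A H
  + (TensorProduct.map (inr K A H) (inl K A H)) ∘ₗ φ ∘ₗ fst K A H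
  + (TensorProduct.map (inl K A H) (inr K A H)) ∘ₗ ψ ∘ₗ fst K A H
  + (TensorProduct.map (inr K A H) (inr K A H)) ∘ₗ P ∘ₗ fst K A H
  + (TensorProduct.map (inr K A H) (inr K A H)) ∘ₗ ΔH ∘ₗ snd K A H
  + (TensorProduct.map (inl K A H) (inr K A H)) ∘ₗ ρ ∘ₗ snd K A H
  + (TensorProduct.map (inr K A H) (inl K A H)) ∘ₗ γ ∘ₗ snd K A H
  + (TensorProduct.map (inl K A H) (inl K A H)) ∘ₗ Q ∘ₗ snd K A H

/-- The linear map `(a, x) ↦ (a + r(x), s(x))` on `A × V`. -/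
noncomputable def phiRS (r : V →ₗ[K] A) (s : V →ₗ[K] V) : (A × V) →ₗ[K] (A × V) :=
  (fst K A V + r ∘ₗ snd K A V).prod (s ∘ₗ snd K A V)

end Structures

end AntiFlexible

open AntiFlexible

section Stmt12

variable {K A V : Type*} [Field K] [CharZero K]
variable [AddCommGroup A] [Module K A] [AddCommGroup V] [Module K V]

/-- Conditions (M1)-(M6) on a pair of linear maps `r : V → A`, `s : V → V`,
relative to two type (a2) extending data of `A` through `V`. -/
def MConds (mA : A →ₗ[K] A →ₗ[K] A)
    (tr : V →ₗ[K] A →ₗ[K] A) (tl : A →ₗ[K] V →ₗ[K] A)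
    (sl : V →ₗ[K] A →ₗ[K] V) (sr : A →ₗ[K] V →ₗ[K] V)
    (σ : V →ₗ[K] V →ₗ[K] A) (mV : V →ₗ[K] V →ₗ[K] V)
    (tr' : V →ₗ[K] A →ₗ[K] A) (tl' : A →ₗ[K] V →ₗ[K] A)
    (sl' : V →ₗ[K] A →ₗ[K] V) (sr' : A →ₗ[K] V →ₗ[K] V)
    (σ' : V →ₗ[K] V →ₗ[K] A) (mV' : V →ₗ[K] V →ₗ[K] V)
    (r : V →ₗ[K] A) (s : V →ₗ[K] V) : Prop :=
  -- (M1)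
  (∀ x y : V, r (mV x y)
    = mA (r x) (r y) + σ' (s x) (s y) - σ x y + tl' (r x) (s y) + tr' (s x) (r y)) ∧
  -- (M2)
  (∀ x y : V, s (mV x y) = sr' (r x) (s y) + sl' (s x) (r y) + mV' (s x) (s y)) ∧
  -- (M3)
  (∀ (x : V) (a : A), r (sl x a) = mA (r x) a - tr x a + tr' (s x) a) ∧
  -- (M4)
  (∀ (x : V) (a : A), s (sl x a) = sl' (s x) a) ∧
  -- (M5)
  (∀ (a : A) (x : V), r (sr a x) = mA a (r x) - tl a x + tl' a (s x)) ∧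
  -- (M6)
  (∀ (a : A) (x : V), s (sr a x) = sr' a (s x))

end Stmt12

namespace AntiFlexible

variable {K A V : Type*} [Field K] [AddCommGroup A] [Module K A] [AddCommGroup V] [Module K V]

theorem prodMul_apply {H : Type*} [AddCommGroup H] [Module K H] (mA : A →ₗ[K] A →ₗ[K] A)
    (mH : H →ₗ[K] H →ₗ[K] H) (tr : H →ₗ[K] A →ₗ[K] A) (tl : A →ₗ[K] H →ₗ[K] A)
    (sr : A →ₗ[K] H →ₗ[K] H) (sl : H →ₗ[K] A →ₗ[K] H)
    (σ : H →ₗ[K] H →ₗ[K] A) (θ : A →ₗ[K] A →ₗ[K] H) (a b : A) (x y : H) :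
    prodMul mA mH tr tl sr sl σ θ (a, x) (b, y)
      = (mA a b + tr x b + tl a y + σ x y, mH x y + sl x b + sr a y + θ a b) := by
  simp only [prodMul, LinearMap.add_apply, compr₂_apply, compl₂_apply, comp_apply, fst_apply,
    snd_apply, inl_apply, inr_apply, Prod.mk_add_mk, Prod.ext_iff]
  constructor <;> abel

@[simp]
theorem phiRS_apply (r : V →ₗ[K] A) (s : V →ₗ[K] V) (a : A) (x : V) :
    phiRS r s (a, x) = (a + r x, s x) := rfl

theorem eq_phiRS_of_map_inl {φ : A × V →ₗ[K] A × V} (h : ∀ a : A, φ (a, 0) = (a, 0)) :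
    φ = phiRS (fst K A V ∘ₗ φ ∘ₗ inr K A V) (snd K A V ∘ₗ φ ∘ₗ inr K A V) := by
  refine LinearMap.ext fun ⟨a, x⟩ => ?_
  rw [← add_zero a, ← zero_add x, ← Prod.mk_add_mk, map_add, h]
  simp [Prod.ext_iff]

theorem phiRS_bijective_iff (r : V →ₗ[K] A) (s : V →ₗ[K] V) :
    Function.Bijective (phiRS r s) ↔ Function.Bijective s := by
  have shear : Function.Bijective fun p : A × V => (p.1 + r p.2, p.2) :=
    Function.bijective_iff_has_inverse.2
      ⟨fun p => (p.1 - r p.2, p.2), fun p => by simp, fun p => by simp⟩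
  have : ⇑(phiRS r s) = Prod.map id s ∘ fun p : A × V => (p.1 + r p.2, p.2) := rfl
  rw [this, Function.Bijective.of_comp_iff _ shear, Prod.map_bijective]
  exact and_iff_right Function.bijective_id

end AntiFlexible

section

variable {K A V : Type*} [Field K] [AddCommGroup A] [Module K A] [AddCommGroup V] [Module K V]
  {mA : A →ₗ[K] A →ₗ[K] A}
  {tr : V →ₗ[K] A →ₗ[K] A} {tl : A →ₗ[K] V →ₗ[K] A}
  {sl : V →ₗ[K] A →ₗ[K] V} {sr : A →ₗ[K] V →ₗ[K] V}
  {σ : V →ₗ[K] V →ₗ[K] A} {mV : V →ₗ[K] V →ₗ[K] V}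
  {tr' : V →ₗ[K] A →ₗ[K] A} {tl' : A →ₗ[K] V →ₗ[K] A}
  {sl' : V →ₗ[K] A →ₗ[K] V} {sr' : A →ₗ[K] V →ₗ[K] V}
  {σ' : V →ₗ[K] V →ₗ[K] A} {mV' : V →ₗ[K] V →ₗ[K] V}
  {r : V →ₗ[K] A} {s : V →ₗ[K] V}

theorem MConds.map_prodMul (h : MConds mA tr tl sl sr σ mV tr' tl' sl' sr' σ' mV' r s)
    (q q' : A × V) :
    phiRS r s (prodMul mA mV tr tl sr sl σ 0 q q')
      = prodMul mA mV' tr' tl' sr' sl' σ' 0 (phiRS r s q) (phiRS r s q') := by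
  obtain ⟨m1, m2, m3, m4, m5, m6⟩ := h
  obtain ⟨a, x⟩ := q
  obtain ⟨b, y⟩ := q'
  simp only [prodMul_apply, phiRS_apply, LinearMap.zero_apply, add_zero, map_add,
    LinearMap.add_apply, m1, m2, m3, m4, m5, m6, Prod.mk.injEq]
  constructor <;> abel

theorem MConds.of_map_prodMul (h : ∀ q q' : A × V,
      phiRS r s (prodMul mA mV tr tl sr sl σ 0 q q')
        = prodMul mA mV' tr' tl' sr' sl' σ' 0 (phiRS r s q) (phiRS r s q')) :
    MConds mA tr tl sl sr σ mV tr' tl' sl' sr' σ' mV' r s := by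
  have hxy := fun x y => h (0, x) (0, y)
  have hxa := fun x a => h (0, x) (a, 0)
  have hax := fun a x => h (a, 0) (0, x)
  simp only [prodMul_apply, phiRS_apply, map_zero, LinearMap.zero_apply, add_zero, zero_add,
    Prod.ext_iff] at hxy hxa hax
  refine ⟨fun x y => ?_, fun x y => ?_, fun x a => ?_, fun x a => ?_, fun a x => ?_,
    fun a x => ?_⟩
  · linear_combination (norm := abel) (hxy x y).1
  · linear_combination (norm := abel) (hxy x y).2
  · linear_combination (norm := abel) (hxa x a).1
  · linear_combination (norm := abel) (hxa x a).2
  · linear_combination (norm := abel) (hax a x).1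
  · linear_combination (norm := abel) (hax a x).2

end

section Stmt12

variable {K A V : Type*} [Field K] [CharZero K]
variable [AddCommGroup A] [Module K A] [AddCommGroup V] [Module K V]

theorem hom_correspondence_a2_general
    (mA : A →ₗ[K] A →ₗ[K] A)
    (tr : V →ₗ[K] A →ₗ[K] A) (tl : A →ₗ[K] V →ₗ[K] A)
    (sl : V →ₗ[K] A →ₗ[K] V) (sr : A →ₗ[K] V →ₗ[K] V)
    (σ : V →ₗ[K] V →ₗ[K] A) (mV : V →ₗ[K] V →ₗ[K] V)
    (tr' : V →ₗ[K] A →ₗ[K] A) (tl' : A →ₗ[K] V →ₗ[K] A)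
    (sl' : V →ₗ[K] A →ₗ[K] V) (sr' : A →ₗ[K] V →ₗ[K] V)
    (σ' : V →ₗ[K] V →ₗ[K] A) (mV' : V →ₗ[K] V →ₗ[K] V) :
    -- (r,s) satisfies (M1)-(M6) iff φ_{r,s} is a homomorphism stabilizing A
    (∀ (r : V →ₗ[K] A) (s : V →ₗ[K] V),
      MConds mA tr tl sl sr σ mV tr' tl' sl' sr' σ' mV' r s
        ↔ ((∀ q q' : A × V,
              phiRS r s ((prodMul mA mV tr tl sr sl σ 0) q q')
                = (prodMul mA mV' tr' tl' sr' sl' σ' 0) (phiRS r s q) (phiRS r s q'))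
            ∧ (∀ a : A, phiRS r s (a, 0) = ((a, 0) : A × V)))) ∧
    -- every homomorphism stabilizing A is of the form φ_{r,s}
    (∀ φ : (A × V) →ₗ[K] (A × V),
      (∀ q q' : A × V,
        φ ((prodMul mA mV tr tl sr sl σ 0) q q')
          = (prodMul mA mV' tr' tl' sr' sl' σ' 0) (φ q) (φ q')) →
      (∀ a : A, φ (a, 0) = ((a, 0) : A × V)) →
      ∃ (r : V →ₗ[K] A) (s : V →ₗ[K] V),
        MConds mA tr tl sl sr σ mV tr' tl' sl' sr' σ' mV' r s ∧ φ = phiRS r s) ∧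
    -- φ_{r,s} is an isomorphism iff s is a linear isomorphism
    (∀ (r : V →ₗ[K] A) (s : V →ₗ[K] V),
      MConds mA tr tl sl sr σ mV tr' tl' sl' sr' σ' mV' r s →
      (Function.Bijective (phiRS r s) ↔ Function.Bijective s)) := by
  refine ⟨fun r s => ⟨fun h => ⟨h.map_prodMul, fun a => by simp⟩,
    fun h => .of_map_prodMul h.1⟩, ?_, fun r s _ => phiRS_bijective_iff r s⟩
  intro φ hmul hinl
  have hφ := eq_phiRS_of_map_inl hinl
  refine ⟨_, _, .of_map_prodMul ?_, hφ⟩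
  rwa [← hφ]

/-- for two type (a2) extending data of `A` through `V`, the maps
`φ_{r,s}(a,x) = (a + r(x), s(x))` set up a bijection between pairs `(r,s)`
satisfying (M1)-(M6) and algebra homomorphisms between the corresponding
unified products which stabilize `A`; moreover `φ_{r,s}` is an isomorphism iff
`s` is a linear isomorphism. -/
theorem hom_correspondence_a2
    (mA : A →ₗ[K] A →ₗ[K] A)
    (tr : V →ₗ[K] A →ₗ[K] A) (tl : A →ₗ[K] V →ₗ[K] A)
    (sl : V →ₗ[K] A →ₗ[K] V) (sr : A →ₗ[K] V →ₗ[K] V)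
    (σ : V →ₗ[K] V →ₗ[K] A) (mV : V →ₗ[K] V →ₗ[K] V)
    (tr' : V →ₗ[K] A →ₗ[K] A) (tl' : A →ₗ[K] V →ₗ[K] A)
    (sl' : V →ₗ[K] A →ₗ[K] V) (sr' : A →ₗ[K] V →ₗ[K] V)
    (σ' : V →ₗ[K] V →ₗ[K] A) (mV' : V →ₗ[K] V →ₗ[K] V)
    (hA : IsAFAlgebra mA)
    (hdat : IsAFAlgebra (prodMul mA mV tr tl sr sl σ 0))
    (hdat' : IsAFAlgebra (prodMul mA mV' tr' tl' sr' sl' σ' 0)) :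
    -- (r,s) satisfies (M1)-(M6) iff φ_{r,s} is a homomorphism stabilizing A
    (∀ (r : V →ₗ[K] A) (s : V →ₗ[K] V),
      MConds mA tr tl sl sr σ mV tr' tl' sl' sr' σ' mV' r s
        ↔ ((∀ q q' : A × V,
              phiRS r s ((prodMul mA mV tr tl sr sl σ 0) q q')
                = (prodMul mA mV' tr' tl' sr' sl' σ' 0) (phiRS r s q) (phiRS r s q'))
            ∧ (∀ a : A, phiRS r s (a, 0) = ((a, 0) : A × V)))) ∧
    -- every homomorphism stabilizing A is of the form φ_{r,s}
    (∀ φ : (A × V) →ₗ[K] (A × V),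
      (∀ q q' : A × V,
        φ ((prodMul mA mV tr tl sr sl σ 0) q q')
          = (prodMul mA mV' tr' tl' sr' sl' σ' 0) (φ q) (φ q')) →
      (∀ a : A, φ (a, 0) = ((a, 0) : A × V)) →
      ∃ (r : V →ₗ[K] A) (s : V →ₗ[K] V),
        MConds mA tr tl sl sr σ mV tr' tl' sl' sr' σ' mV' r s ∧ φ = phiRS r s) ∧
    -- φ_{r,s} is an isomorphism iff s is a linear isomorphism
    (∀ (r : V →ₗ[K] A) (s : V →ₗ[K] V),
      MConds mA tr tl sl sr σ mV tr' tl' sl' sr' σ' mV' r s →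
      (Function.Bijective (phiRS r s) ↔ Function.Bijective s)) :=
  hom_correspondence_a2_general mA tr tl sl sr σ mV tr' tl' sl' sr' σ' mV'

end Stmt12
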